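/- arXiv:2309.11790 — 3 statements merged into one kernel-verified Lean document; each statement's English description precedes it below -/
import Mathlib

section
/- Let (E,⟨·,·⟩) be a real inner product space, V ∈ E with ‖V‖ < 1, λ := 1 − ‖V‖², and let F(y) = (√(λ‖y‖² + ⟨y,V⟩²) − ⟨y,V⟩)/λ be the associated Randers norm. Then for any W ∈ E, F(−W) < 1 if and only if ‖V + W‖ < 1. -/
open scoped RealInnerProductSpace

theorem Real.sqrt_mul_add_sq_add_lt_iff {l a c : ℝ} (hl : 0 < l) (ha : 0 ≤ a) :
    √(l * a + c ^ 2) + c < l ↔ a + 2 * c < l := by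
  constructor
  · intro h
    have hc : 0 < l - c := by linarith [Real.sqrt_nonneg (l * a + c ^ 2)]
    have hsq : l * a + c ^ 2 < (l - c) ^ 2 := (Real.sqrt_lt' hc).mp (by linarith)
    nlinarith
  · intro h
    have hc : 0 < l - c := by linarith
    have hsq : l * a + c ^ 2 < (l - c) ^ 2 := by nlinarith
    linarith [(Real.sqrt_lt' hc).mpr hsq]

theorem randers_FnegW_lt_one_iff
    {E : Type*} [NormedAddCommGroup E] [InnerProductSpace ℝ E]
    (V : E) (hV : ‖V‖ < 1) (lam : ℝ) (hlam : lam = 1 - ‖V‖ ^ 2)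
    (F : E → ℝ)
    (hF : ∀ y : E, F y = (Real.sqrt (lam * ‖y‖ ^ 2 + ⟪y, V⟫ ^ 2) - ⟪y, V⟫) / lam) :
    ∀ W : E, F (-W) < 1 ↔ ‖V + W‖ < 1 := by
  intro W
  have hlam_pos : 0 < lam := by
    rw [hlam, sub_pos]
    exact pow_lt_one₀ (norm_nonneg V) hV two_ne_zero
  have hFW : F (-W) = (√(lam * ‖W‖ ^ 2 + ⟪W, V⟫ ^ 2) + ⟪W, V⟫) / lam := by
    rw [hF, inner_neg_left, norm_neg, neg_sq, sub_neg_eq_add]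
  rw [hFW, div_lt_one hlam_pos, Real.sqrt_mul_add_sq_add_lt_iff hlam_pos (sq_nonneg _),
    ← sq_lt_one_iff₀ (norm_nonneg _), norm_add_sq_real, real_inner_comm, hlam]
  constructor <;> intro h <;> linarith
end

section
/- Let (E, a) be a finite-dimensional real inner product space, b ∈ E* with ‖b‖_a < 1, ε := 1 − ‖b‖_a², h(y,z) := ε(a(y,z) − b(y)b(z)), V := −b♯/ε. Let F(y) := ‖y‖_a + b(y) be the Randers norm and W ∈ E. Then 1 − ‖V + W‖_h² = ε·(1 + F(W))·(1 − F(−W)). -/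
open scoped RealInnerProductSpace

section Navigation

variable {E : Type*} [NormedAddCommGroup E] [InnerProductSpace ℝ E]

/-- The left side is `1 - ‖V + w‖_h²` for the navigation data `h = ε (a - b ⊗ b)`, `V = -ε⁻¹ b♯`. -/
lemma one_sub_navigation_sq (b w : E) {ε : ℝ} (hε : ε = 1 - ‖b‖ ^ 2) (hε0 : ε ≠ 0) :
    1 - ε * (‖w - ε⁻¹ • b‖ ^ 2 - ⟪b, w - ε⁻¹ • b⟫ ^ 2) = ε * ((1 + ⟪b, w⟫) ^ 2 - ‖w‖ ^ 2) := by
  rw [norm_sub_sq_real, inner_sub_right, inner_smul_right, inner_smul_right,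
    real_inner_self_eq_norm_sq, norm_smul, Real.norm_eq_abs, mul_pow, sq_abs, real_inner_comm w b]
  have hb : ‖b‖ ^ 2 = 1 - ε := by rw [hε]; ring
  rw [hb]
  field_simp
  ring

end Navigation

theorem sigma_eq_eps_eta_general
    {E : Type*} [NormedAddCommGroup E] [InnerProductSpace ℝ E]
    (bv : E) (hb : ‖bv‖ < 1) (eps : ℝ) (heps : eps = 1 - ‖bv‖ ^ 2)
    (h : E → E → ℝ)
    (hh : ∀ y z : E, h y z = eps * (⟪y, z⟫ - ⟪bv, y⟫ * ⟪bv, z⟫))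
    (V : E) (hV : V = -(1 / eps) • bv)
    (F : E → ℝ) (hF : ∀ y : E, F y = ‖y‖ + ⟪bv, y⟫)
    (W : E) :
    1 - h (V + W) (V + W) = eps * (1 + F W) * (1 - F (-W)) := by
  have heps0 : eps ≠ 0 := by
    rw [heps, sub_ne_zero]
    exact (pow_lt_one₀ (norm_nonneg bv) hb two_ne_zero).ne'
  have hVW : V + W = W - eps⁻¹ • bv := by
    rw [hV, one_div, neg_smul, add_comm, sub_eq_add_neg]
  calc 1 - h (V + W) (V + W)
      = 1 - eps * (‖W - eps⁻¹ • bv‖ ^ 2 - ⟪bv, W - eps⁻¹ • bv⟫ ^ 2) := by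
        rw [hh, hVW, real_inner_self_eq_norm_sq, sq, sq]
    _ = eps * ((1 + ⟪bv, W⟫) ^ 2 - ‖W‖ ^ 2) := one_sub_navigation_sq bv W heps heps0
    _ = eps * (1 + F W) * (1 - F (-W)) := by
        rw [hF, hF, norm_neg, inner_neg_right]
        ring

/-- `σ = ε·η`: with navigation data `(h, V)` of the Randers norm `F = α + β`
(`b` represented by its Riesz representative `bv`), one has
`1 - ‖V + W‖_h² = ε (1 + F(W)) (1 - F(-W))`. -/
theorem sigma_eq_eps_eta
    {E : Type*} [NormedAddCommGroup E] [InnerProductSpace ℝ E] [FiniteDimensional ℝ E]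
    (bv : E) (hb : ‖bv‖ < 1) (eps : ℝ) (heps : eps = 1 - ‖bv‖ ^ 2)
    (h : E → E → ℝ)
    (hh : ∀ y z : E, h y z = eps * (⟪y, z⟫ - ⟪bv, y⟫ * ⟪bv, z⟫))
    (V : E) (hV : V = -(1 / eps) • bv)
    (F : E → ℝ) (hF : ∀ y : E, F y = ‖y‖ + ⟪bv, y⟫)
    (W : E) :
    1 - h (V + W) (V + W) = eps * (1 + F W) * (1 - F (-W)) :=
  sigma_eq_eps_eta_general bv hb eps heps h hh V hV F hF W
end

section
/- Let (E,a) be a finite-dimensional real inner product space, b ∈ E* with ‖b‖_a < 1, ε := 1 − ‖b‖_a², h := ε(a − b⊗b), V := −b♯/ε, and W ∈ E with F(−W) < 1 where F(y) = ‖y‖_a + b(y). Set η := (1 + F(W))(1 − F(−W)) and W̃(z) := a(W,z) − b(z)(1 + b(W)). Then the Randers data with navigation data (h, V+W) is given by ã(y,z) = (1/η)(a(y,z) − b(y)b(z)) + (1/η²)W̃(y)W̃(z) and b̃(z) = −W̃(z)/η. -/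
open scoped RealInnerProductSpace

/-!
The left-hand sides are Zermelo's formulas `ã = h/σ + h(U,·) ⊗ h(U,·)/σ²`, `b̃ = -h(U,·)/σ` for
`U = V + W`. With `a' := a - b ⊗ b`, the data are `h = ε a'` and `V = -b♯/ε`. Since
`a'(b♯, ·) = ε b`, the wind `V` contributes exactly `-b` to `a'(V + W, ·)`, so `h(V + W, ·) = ε W̃`.
Evaluating `W̃` at `V + W` gives `σ = ε ((1 + b(W))² - ‖W‖²) = ε η`, and the factors `ε` cancel.
-/

section NavigationData

variable {E : Type*} [NormedAddCommGroup E] [InnerProductSpace ℝ E] {b : E} {ε : ℝ}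

lemma norm_add_inner_nonneg (hb : ‖b‖ ≤ 1) (w : E) : 0 ≤ ‖w‖ + ⟪b, w⟫ := by
  have hbw : -(‖b‖ * ‖w‖) ≤ ⟪b, w⟫ := neg_le_of_abs_le (abs_real_inner_le_norm b w)
  nlinarith [norm_nonneg w]

lemma inner_sub_inner_mul_inner_neg_smul_add (hε : ε = 1 - ‖b‖ ^ 2) (hε₀ : ε ≠ 0) (w z : E) :
    ⟪-(1 / ε) • b + w, z⟫ - ⟪b, -(1 / ε) • b + w⟫ * ⟪b, z⟫ =
      ⟪w, z⟫ - ⟪b, z⟫ * (1 + ⟪b, w⟫) := by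
  simp only [inner_add_left, inner_add_right, inner_smul_left, inner_smul_right,
    real_inner_self_eq_norm_sq, RCLike.conj_to_real]
  field_simp
  linear_combination ⟪b, z⟫ * hε

lemma one_sub_mul_inner_sub_inner_mul_neg_smul_add (hε : ε = 1 - ‖b‖ ^ 2) (hε₀ : ε ≠ 0)
    (w : E) :
    1 - ε * (⟪w, -(1 / ε) • b + w⟫ - ⟪b, -(1 / ε) • b + w⟫ * (1 + ⟪b, w⟫)) =
      ε * ((1 + ⟪b, w⟫) ^ 2 - ‖w‖ ^ 2) := by
  simp only [inner_add_right, inner_smul_right, real_inner_self_eq_norm_sq,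
    real_inner_comm b w]
  field_simp
  linear_combination (-(1 + ⟪b, w⟫)) * hε

end NavigationData

theorem randers_beta_change_formulas_general
    {E : Type*} [NormedAddCommGroup E] [InnerProductSpace ℝ E]
    (bv : E) (hb : ‖bv‖ < 1) (eps : ℝ) (heps : eps = 1 - ‖bv‖ ^ 2)
    (h : E → E → ℝ)
    (hh : ∀ y z : E, h y z = eps * (⟪y, z⟫ - ⟪bv, y⟫ * ⟪bv, z⟫))
    (V : E) (hV : V = -(1 / eps) • bv)
    (F : E → ℝ) (hF : ∀ y : E, F y = ‖y‖ + ⟪bv, y⟫)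
    (W : E) (hW : F (-W) < 1)
    (eta : ℝ) (heta : eta = (1 + F W) * (1 - F (-W)))
    (Wt : E → ℝ) (hWt : ∀ z : E, Wt z = ⟪W, z⟫ - ⟪bv, z⟫ * (1 + ⟪bv, W⟫))
    (sigma : ℝ) (hsigma : sigma = 1 - h (V + W) (V + W)) :
    (∀ y z : E,
      h y z / sigma + h (V + W) y * h (V + W) z / sigma ^ 2 =
        (1 / eta) * (⟪y, z⟫ - ⟪bv, y⟫ * ⟪bv, z⟫) + (1 / eta ^ 2) * (Wt y * Wt z)) ∧
    (∀ z : E, -(h (V + W) z) / sigma = -(Wt z) / eta) := by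
  have hε : 0 < eps := heps ▸ sub_pos.2 (pow_lt_one₀ (norm_nonneg bv) hb two_ne_zero)
  have hη : 0 < eta := by
    have := norm_add_inner_nonneg hb.le W
    rw [heta]
    exact mul_pos (by linarith [hF W]) (by linarith)
  have hU : ∀ z, h (V + W) z = eps * Wt z := fun z => by
    rw [hh, hV, hWt, inner_sub_inner_mul_inner_neg_smul_add heps hε.ne']
  have hσ : sigma = eps * eta := by
    rw [hsigma, hU, hWt, hV, one_sub_mul_inner_sub_inner_mul_neg_smul_add heps hε.ne', heta,
      hF, hF, norm_neg, inner_neg_right]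
    ring
  refine ⟨fun y z => ?_, fun z => ?_⟩
  · rw [hh, hU, hU, hσ]
    field_simp
  · rw [hU, hσ]
    field_simp

/-- Expressions of `α̃` and `β̃` for the Randers metric with navigation data
`(h, V + W)`: with `σ := 1 - ‖V + W‖_h²`, the Zermelo formulas
`ã(y,z) = h(y,z)/σ + h(U,y)h(U,z)/σ²`, `b̃(z) = -h(U,z)/σ` become
`ã(y,z) = (1/η)(a(y,z) - b(y)b(z)) + (1/η²) W̃(y) W̃(z)`, `b̃(z) = -W̃(z)/η`. -/
theorem randers_beta_change_formulas
    {E : Type*} [NormedAddCommGroup E] [InnerProductSpace ℝ E] [FiniteDimensional ℝ E]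
    (bv : E) (hb : ‖bv‖ < 1) (eps : ℝ) (heps : eps = 1 - ‖bv‖ ^ 2)
    (h : E → E → ℝ)
    (hh : ∀ y z : E, h y z = eps * (⟪y, z⟫ - ⟪bv, y⟫ * ⟪bv, z⟫))
    (V : E) (hV : V = -(1 / eps) • bv)
    (F : E → ℝ) (hF : ∀ y : E, F y = ‖y‖ + ⟪bv, y⟫)
    (W : E) (hW : F (-W) < 1)
    (eta : ℝ) (heta : eta = (1 + F W) * (1 - F (-W)))
    (Wt : E → ℝ) (hWt : ∀ z : E, Wt z = ⟪W, z⟫ - ⟪bv, z⟫ * (1 + ⟪bv, W⟫))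
    (sigma : ℝ) (hsigma : sigma = 1 - h (V + W) (V + W)) :
    (∀ y z : E,
      h y z / sigma + h (V + W) y * h (V + W) z / sigma ^ 2 =
        (1 / eta) * (⟪y, z⟫ - ⟪bv, y⟫ * ⟪bv, z⟫) + (1 / eta ^ 2) * (Wt y * Wt z)) ∧
    (∀ z : E, -(h (V + W) z) / sigma = -(Wt z) / eta) :=
  randers_beta_change_formulas_general bv hb eps heps h hh V hV F hF W hW eta heta Wt hWt sigma
    hsigma
end
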